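/- arXiv:2601.13780 — 3 statements merged into one kernel-verified Lean document; each statement's English description precedes it below -/
import Mathlib

section
/- Combination formula for detecting out-edges in DAGs: let G be a DAG with magnetic Laplacian L_q, let R = Re(−L_q) and I = Im(−L_q) restricted to off-diagonal entries, set c = cos(2πq), s = sin(2πq) with s ≠ 0, and define T_{ij} = R_{ij} + ((2−c)/s)·I_{ij} for i ≠ j. Then T_{ij} = 2 if (i,j) ∈ E, T_{ij} = 2(c−1) if (j,i) ∈ E, and T_{ij} = 0 otherwise. In particular, if c < 1, then for every node i with at least one outgoing edge, T_{ij} = max_k T_{ik} over k ≠ i if and only if A_{ij} = 1. -/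
open Matrix Complex

/-! For `i ≠ j` the entry `-L_q i j` is `e^{iθ}` on an edge `i → j`, `e^{-iθ}` on a reverse edge
and `0` otherwise, where `θ = 2πq`. The weight `(2 - cos θ) / sin θ` is chosen so that
`cos θ + ((2 - cos θ) / sin θ) sin θ = 2`; the reverse edge then scores
`cos θ - (2 - cos θ) = 2 (cos θ - 1)`. Hence off the diagonal `T = 2 A + 2 (cos θ - 1) Aᵀ`, and
when `cos θ < 1` the value `2` is the strict row maximum, attained exactly on the out-edges. -/

theorem re_add_mul_im_ofReal_mul_exp_mul_I (r φ k : ℝ) :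
    ((r : ℂ) * exp (φ * I)).re + k * ((r : ℂ) * exp (φ * I)).im =
      r * (Real.cos φ + k * Real.sin φ) := by
  rw [re_ofReal_mul, im_ofReal_mul, exp_ofReal_mul_I_re, exp_ofReal_mul_I_im]
  ring

theorem max_mul_cos_add_two_sub_cos_div_sin_mul_sin {θ a b : ℝ} (hθ : Real.sin θ ≠ 0)
    (ha : a = 0 ∨ a = 1) (hb : b = 0 ∨ b = 1) (hab : a * b = 0) :
    max a b * (Real.cos (θ * (a - b)) +
        (2 - Real.cos θ) / Real.sin θ * Real.sin (θ * (a - b))) =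
      2 * a + 2 * (Real.cos θ - 1) * b := by
  rcases ha with rfl | rfl <;> rcases hb with rfl | rfl
  · simp
  · simp only [max_eq_right zero_le_one, zero_sub, mul_neg_one, Real.cos_neg, Real.sin_neg]
    field_simp
    ring
  · simp only [max_eq_left zero_le_one, sub_zero, mul_one]
    field_simp
    ring
  · norm_num at hab

theorem forall_mem_le_iff_of_eq_max_iff {ι α : Type*} [PartialOrder α] {s : Set ι}
    {f : ι → α} {M : α} {P : ι → Prop} (hle : ∀ k ∈ s, f k ≤ M)
    (heq : ∀ k ∈ s, f k = M ↔ P k) (hex : ∃ k ∈ s, P k) {j : ι} (hj : j ∈ s) :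
    (∀ k ∈ s, f k ≤ f j) ↔ P j := by
  obtain ⟨k₀, hk₀, hPk₀⟩ := hex
  constructor
  · intro hmax
    have hMj : M ≤ f j := (heq k₀ hk₀).2 hPk₀ ▸ hmax k₀ hk₀
    exact (heq j hj).1 (le_antisymm (hle j hj) hMj)
  · intro hPj k hk
    exact (heq j hj).2 hPj ▸ hle k hk

theorem dag_T_matrix_identifies_out_edges_general {n : ℕ} (q : ℝ)
    (A : Matrix (Fin n) (Fin n) ℝ)
    (hA01 : ∀ i j, A i j = 0 ∨ A i j = 1)
    (hloop : ∀ i, A i i = 0)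
    (h2cyc : ∀ i j, i ≠ j → A i j * A j i = 0)
    (As : Matrix (Fin n) (Fin n) ℝ)
    (hAs : ∀ i j, As i j = max (A i j) (A j i))
    (L : Matrix (Fin n) (Fin n) ℂ)
    (hL : ∀ i j, L i j =
      ((if i = j then ∑ k, As i k else 0 : ℝ) : ℂ) -
        (As i j : ℂ) * Complex.exp (Complex.I * (2 * Real.pi * q * (A i j - A j i))))
    (c s : ℝ) (hc : c = Real.cos (2 * Real.pi * q)) (hs : s = Real.sin (2 * Real.pi * q))
    (hs0 : s ≠ 0)
    (T : Matrix (Fin n) (Fin n) ℝ)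
    (hT : ∀ i j, i ≠ j → T i j = ((-L) i j).re + ((2 - c) / s) * ((-L) i j).im) :
    (∀ i j, i ≠ j →
      (A i j = 1 → T i j = 2) ∧
      (A j i = 1 → T i j = 2 * (c - 1)) ∧
      (A i j = 0 → A j i = 0 → T i j = 0)) ∧
    (c < 1 →
      ∀ i : Fin n, (∃ j, A i j = 1) →
        ∀ j : Fin n, j ≠ i →
          ((∀ k : Fin n, k ≠ i → T i k ≤ T i j) ↔ A i j = 1)) := by
  have hT_eq : ∀ i j, i ≠ j → T i j = 2 * A i j + 2 * (c - 1) * A j i := by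
    intro i j hij
    have hnegL : (-L) i j =
        (As i j : ℂ) * exp (((2 * Real.pi * q * (A i j - A j i) : ℝ) : ℂ) * I) := by
      rw [neg_apply, hL, if_neg hij, mul_comm I]
      push_cast
      ring
    rw [hT i j hij, hnegL, re_add_mul_im_ofReal_mul_exp_mul_I, hAs, hc, hs]
    exact max_mul_cos_add_two_sub_cos_div_sin_mul_sin (hs ▸ hs0) (hA01 i j) (hA01 j i)
      (h2cyc i j hij)
  have hcases : ∀ i j, i ≠ j → (A i j = 0 ∧ A j i = 0) ∨ (A i j = 1 ∧ A j i = 0) ∨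
      (A i j = 0 ∧ A j i = 1) := by
    intro i j hij
    have := h2cyc i j hij
    rcases hA01 i j with h | h <;> rcases hA01 j i with h' | h' <;> simp_all
  refine ⟨fun i j hij => ?_, fun hc1 i ⟨j₀, hj₀⟩ j hji => ?_⟩
  · rw [hT_eq i j hij]
    rcases hcases i j hij with ⟨h, h'⟩ | ⟨h, h'⟩ | ⟨h, h'⟩ <;> simp [h, h']
  · have hrow : ∀ k ∈ {k | k ≠ i}, T i k ≤ 2 ∧ (T i k = 2 ↔ A i k = 1) := by
      intro k hki
      rw [hT_eq i k (Ne.symm hki)]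
      rcases hcases i k (Ne.symm hki) with ⟨h, h'⟩ | ⟨h, h'⟩ | ⟨h, h'⟩ <;>
        simp only [h, h'] <;> constructor <;> norm_num <;> linarith
    have hj₀i : j₀ ≠ i := by rintro rfl; simp [hloop] at hj₀
    exact forall_mem_le_iff_of_eq_max_iff (fun k hk => (hrow k hk).1) (fun k hk => (hrow k hk).2)
      ⟨j₀, hj₀i, hj₀⟩ hji

/-- Combination formula for detecting out-edges in DAGs: with
`T i j = Re(-L_q) i j + ((2-c)/s) * Im(-L_q) i j`, we get `T i j = 2` on edges,
`2(c-1)` on reverse edges, `0` otherwise; and if `c < 1`, for any node `i` with an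
outgoing edge, `T i j` attains the row maximum over `k ≠ i` iff `A i j = 1`. -/
theorem dag_T_matrix_identifies_out_edges {n : ℕ} (q : ℝ)
    (hn : 2 ≤ n)
    (A : Matrix (Fin n) (Fin n) ℝ)
    (hA01 : ∀ i j, A i j = 0 ∨ A i j = 1)
    (hloop : ∀ i, A i i = 0)
    (h2cyc : ∀ i j, i ≠ j → A i j * A j i = 0)
    (As : Matrix (Fin n) (Fin n) ℝ)
    (hAs : ∀ i j, As i j = max (A i j) (A j i))
    (L : Matrix (Fin n) (Fin n) ℂ)
    (hL : ∀ i j, L i j =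
      ((if i = j then ∑ k, As i k else 0 : ℝ) : ℂ) -
        (As i j : ℂ) * Complex.exp (Complex.I * (2 * Real.pi * q * (A i j - A j i))))
    (c s : ℝ) (hc : c = Real.cos (2 * Real.pi * q)) (hs : s = Real.sin (2 * Real.pi * q))
    (hs0 : s ≠ 0)
    (T : Matrix (Fin n) (Fin n) ℝ)
    (hT : ∀ i j, i ≠ j → T i j = ((-L) i j).re + ((2 - c) / s) * ((-L) i j).im) :
    (∀ i j, i ≠ j →
      (A i j = 1 → T i j = 2) ∧
      (A j i = 1 → T i j = 2 * (c - 1)) ∧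
      (A i j = 0 → A j i = 0 → T i j = 0)) ∧
    (c < 1 →
      ∀ i : Fin n, (∃ j, A i j = 1) →
        ∀ j : Fin n, j ≠ i →
          ((∀ k : Fin n, k ≠ i → T i k ≤ T i j) ↔ A i j = 1)) :=
  dag_T_matrix_identifies_out_edges_general q A hA01 hloop h2cyc As hAs L hL c s hc hs hs0 T hT
end

section
/- Bilinear recoverability under column permutations (Lemma for the mLPE): let G be a directed acyclic graph with magnetic Laplacian L_q = UΛU*, write UΛ^{1/2} = X + iY with X, Y ∈ ℝ^{n×n}, and let M_X, M_Y ∈ ℝ^{n×n} be permutation matrices. Set P = [X M_X , Y M_Y] ∈ ℝ^{n×2n}. Then there exist matrices W^{K_R}, W^{Q_R}, W^{K_I}, W^{Q_I} ∈ ℝ^{2n×2n} such that (P W^{K_R})(P W^{Q_R})ᵀ = Re(L_q) and (P W^{K_I})(P W^{Q_I})ᵀ = Im(L_q). -/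
/-! With `S = UΛ^{1/2} = X + iY` we have `L = SSᴴ`, whence `Re L = XXᵀ + YYᵀ` and
`Im L = YXᵀ - XYᵀ`. Since `M Mᵀ = 1` for a permutation matrix, right-multiplying `P` by
block matrices built from `M_Xᵀ, M_Yᵀ` recovers `[X, Y]`, `[Y, X]` or `[X, -Y]`, and the
products of these give both identities. -/

open Matrix Complex

namespace Matrix

variable {m n k R : Type*}

theorem permMatrix_mul_transpose_permMatrix [Fintype n] [DecidableEq n] [NonAssocSemiring R]
    (σ : Equiv.Perm n) : σ.permMatrix R * (σ.permMatrix R)ᵀ = 1 := by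
  rw [transpose_permMatrix, ← permMatrix_mul, inv_mul_cancel, permMatrix_one]

theorem mul_mul_transpose_mul_of_mul_transpose_eq_one [Fintype n] [DecidableEq n] [CommSemiring R]
    {M : Matrix n n R} (hM : M * Mᵀ = 1) (A B : Matrix m n R) :
    A * M * (B * M)ᵀ = A * Bᵀ := by
  rw [transpose_mul, Matrix.mul_assoc, ← Matrix.mul_assoc M, hM, Matrix.one_mul]

theorem fromCols_mul_transpose_fromCols [Fintype n] [Fintype k] [Semiring R]
    (A C : Matrix m n R) (B D : Matrix m k R) :
    fromCols A B * (fromCols C D)ᵀ = A * Cᵀ + B * Dᵀ := by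
  rw [transpose_fromCols, fromCols_mul_fromRows]

section Complex

variable [Fintype k]

theorem re_mul_conjTranspose_self (S : Matrix m k ℂ) :
    (S * Sᴴ).map re = S.map re * (S.map re)ᵀ + S.map im * (S.map im)ᵀ := by
  ext i j
  simp only [map_apply, mul_apply, add_apply, transpose_apply, conjTranspose_apply, re_sum,
    ← Finset.sum_add_distrib, RCLike.star_def, mul_re, conj_re, conj_im]
  exact Finset.sum_congr rfl fun _ _ => by ring

theorem im_mul_conjTranspose_self (S : Matrix m k ℂ) :
    (S * Sᴴ).map im = S.map im * (S.map re)ᵀ - S.map re * (S.map im)ᵀ := by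
  ext i j
  simp only [map_apply, mul_apply, sub_apply, transpose_apply, conjTranspose_apply, im_sum,
    ← Finset.sum_sub_distrib, RCLike.star_def, mul_im, conj_re, conj_im]
  exact Finset.sum_congr rfl fun _ _ => by ring

theorem mul_diagonal_sqrt_mul_conjTranspose_self [DecidableEq k] (U : Matrix m k ℂ)
    {lam : k → ℝ} (hlam : ∀ i, 0 ≤ lam i) :
    U * diagonal (fun i => (√(lam i) : ℂ)) * (U * diagonal (fun i => (√(lam i) : ℂ)))ᴴ =
      U * diagonal (fun i => (lam i : ℂ)) * Uᴴ := by
  have hdiag : diagonal (fun i => (√(lam i) : ℂ)) * (diagonal fun i => (√(lam i) : ℂ))ᴴ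
      = diagonal (fun i => (lam i : ℂ)) := by
    rw [diagonal_conjTranspose, diagonal_mul_diagonal]
    congr 1
    funext i
    simp only [Pi.star_apply, RCLike.star_def, conj_ofReal, ← ofReal_mul,
      Real.mul_self_sqrt (hlam i)]
  rw [conjTranspose_mul, Matrix.mul_assoc, ← Matrix.mul_assoc _ _ Uᴴ, hdiag, Matrix.mul_assoc]

end Complex

end Matrix

theorem mLPE_bilinear_recoverability_general {n : ℕ}
    (L U : Matrix (Fin n) (Fin n) ℂ)
    (lam : Fin n → ℝ) (hlam : ∀ i, 0 ≤ lam i)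
    (hL : L = U * Matrix.diagonal (fun i => (lam i : ℂ)) * Uᴴ)
    (X Y : Matrix (Fin n) (Fin n) ℝ)
    (hX : X = (U * Matrix.diagonal (fun i => (Real.sqrt (lam i) : ℂ))).map Complex.re)
    (hY : Y = (U * Matrix.diagonal (fun i => (Real.sqrt (lam i) : ℂ))).map Complex.im)
    (MX MY : Matrix (Fin n) (Fin n) ℝ)
    (hMX : ∃ σ : Equiv.Perm (Fin n), MX = σ.permMatrix ℝ)
    (hMY : ∃ σ : Equiv.Perm (Fin n), MY = σ.permMatrix ℝ)
    (P : Matrix (Fin n) (Fin n ⊕ Fin n) ℝ)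
    (hP : P = Matrix.fromCols (X * MX) (Y * MY)) :
    ∃ WKR WQR WKI WQI : Matrix (Fin n ⊕ Fin n) (Fin n ⊕ Fin n) ℝ,
      (P * WKR) * (P * WQR)ᵀ = L.map Complex.re ∧
      (P * WKI) * (P * WQI)ᵀ = L.map Complex.im := by
  replace hMX : MX * MXᵀ = 1 := by
    obtain ⟨σ, rfl⟩ := hMX
    exact permMatrix_mul_transpose_permMatrix σ
  replace hMY : MY * MYᵀ = 1 := by
    obtain ⟨σ, rfl⟩ := hMY
    exact permMatrix_mul_transpose_permMatrix σ
  rw [hL, ← mul_diagonal_sqrt_mul_conjTranspose_self U hlam, re_mul_conjTranspose_self,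
    im_mul_conjTranspose_self, ← hX, ← hY]
  have hPswap : P * fromBlocks 0 MXᵀ MYᵀ 0 = fromCols Y X := by
    simp only [hP, fromCols_mul_fromBlocks, Matrix.mul_zero, zero_add, add_zero,
      Matrix.mul_assoc, hMX, hMY, Matrix.mul_one]
  have hPsign : P * fromBlocks MXᵀ 0 0 (-MYᵀ) = fromCols X (-Y) := by
    simp only [hP, fromCols_mul_fromBlocks, Matrix.mul_zero, Matrix.mul_neg, zero_add, add_zero,
      Matrix.mul_assoc, hMX, hMY, Matrix.mul_one]
  refine ⟨1, 1, fromBlocks 0 MXᵀ MYᵀ 0, fromBlocks MXᵀ 0 0 (-MYᵀ), ?_, ?_⟩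
  · rw [Matrix.mul_one, hP, fromCols_mul_transpose_fromCols,
      mul_mul_transpose_mul_of_mul_transpose_eq_one hMX,
      mul_mul_transpose_mul_of_mul_transpose_eq_one hMY]
  · rw [hPswap, hPsign, fromCols_mul_transpose_fromCols, transpose_neg, Matrix.mul_neg,
      ← sub_eq_add_neg]

/-- Bilinear recoverability under column permutations: with `L_q = UΛU*` Hermitian PSD,
`UΛ^{1/2} = X + iY`, and permutation matrices `M_X, M_Y`, the block matrix
`P = [X M_X, Y M_Y]` admits weight matrices recovering `Re L_q` and `Im L_q`
via bilinear products. -/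
theorem mLPE_bilinear_recoverability {n : ℕ}
    (L U : Matrix (Fin n) (Fin n) ℂ)
    (hU : U * Uᴴ = 1)
    (lam : Fin n → ℝ) (hlam : ∀ i, 0 ≤ lam i)
    (hL : L = U * Matrix.diagonal (fun i => (lam i : ℂ)) * Uᴴ)
    (X Y : Matrix (Fin n) (Fin n) ℝ)
    (hX : X = (U * Matrix.diagonal (fun i => (Real.sqrt (lam i) : ℂ))).map Complex.re)
    (hY : Y = (U * Matrix.diagonal (fun i => (Real.sqrt (lam i) : ℂ))).map Complex.im)
    (MX MY : Matrix (Fin n) (Fin n) ℝ)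
    (hMX : ∃ σ : Equiv.Perm (Fin n), MX = σ.permMatrix ℝ)
    (hMY : ∃ σ : Equiv.Perm (Fin n), MY = σ.permMatrix ℝ)
    (P : Matrix (Fin n) (Fin n ⊕ Fin n) ℝ)
    (hP : P = Matrix.fromCols (X * MX) (Y * MY)) :
    ∃ WKR WQR WKI WQI : Matrix (Fin n ⊕ Fin n) (Fin n ⊕ Fin n) ℝ,
      (P * WKR) * (P * WQR)ᵀ = L.map Complex.re ∧
      (P * WKI) * (P * WQI)ᵀ = L.map Complex.im :=
  mLPE_bilinear_recoverability_general L U lam hlam hL X Y hX hY MX MY hMX hMY P hP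
end

section
/- Exact recovery of the directed adjacency from the T-matrix by thresholding: under the setting of the magnetic Laplacian of a DAG with s = sin(2πq) ≠ 0 and c = cos(2πq) < 1, defining T_{ij} = Re(−L_q)_{ij} + ((2−c)/s)·Im(−L_q)_{ij} for i ≠ j and T_{ii} arbitrary, the matrix Â with Â_{ij} = 1 if i ≠ j and T_{ij} > 1, else Â_{ij} = 0, equals the adjacency matrix A of the DAG. -/
/-!
Off the diagonal, `-L` has entry `As i j * exp (i θ (A i j - A j i))` with `θ = 2πq`, i.e. `0`,
`exp (iθ)` or `exp (-iθ)` according as `i, j` are non-adjacent, `i → j`, or `j → i`. The weight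
`κ = (2 - cos θ) / sin θ` in `T = Re + κ Im` is chosen so that `cos θ + κ sin θ = 2`; then
`cos θ - κ sin θ = 2 cos θ - 2 ≤ 0`, so only forward edges score above the threshold `1`.
-/

open Matrix Complex

theorem re_add_mul_im_exp_ofReal_mul_I (θ κ : ℝ) :
    (exp (θ * I)).re + κ * (exp (θ * I)).im = Real.cos θ + κ * Real.sin θ := by
  rw [exp_ofReal_mul_I_re, exp_ofReal_mul_I_im]

theorem threshold_magnetic_entry_eq {θ a b : ℝ} (hθ : Real.sin θ ≠ 0)
    (ha : a = 0 ∨ a = 1) (hb : b = 0 ∨ b = 1) (hab : a * b = 0) :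
    let z : ℂ := (max a b : ℝ) * exp (I * (θ * (a - b)))
    (if 1 < z.re + (2 - Real.cos θ) / Real.sin θ * z.im then (1 : ℝ) else 0) = a := by
  intro z
  set κ := (2 - Real.cos θ) / Real.sin θ
  have hκ : κ * Real.sin θ = 2 - Real.cos θ := div_mul_cancel₀ _ hθ
  rcases ha with rfl | rfl <;> rcases hb with rfl | rfl
  · simp [z]
  · have hz : z = exp ((-θ : ℝ) * I) := by simp [z]; ring_nf
    have hscore : z.re + κ * z.im = 2 * Real.cos θ - 2 := by
      rw [hz, re_add_mul_im_exp_ofReal_mul_I, Real.cos_neg, Real.sin_neg]; linarith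
    rw [if_neg (by linarith [Real.cos_le_one θ])]
  · have hz : z = exp (θ * I) := by simp [z]; ring_nf
    have hscore : z.re + κ * z.im = 2 := by
      rw [hz, re_add_mul_im_exp_ofReal_mul_I]; linarith
    rw [if_pos (by linarith)]
  · norm_num at hab

theorem dag_adjacency_recovery_by_thresholding_general {n : ℕ} (q : ℝ)
    (A : Matrix (Fin n) (Fin n) ℝ)
    (hA01 : ∀ i j, A i j = 0 ∨ A i j = 1)
    (hloop : ∀ i, A i i = 0)
    (h2cyc : ∀ i j, i ≠ j → A i j * A j i = 0)
    (As : Matrix (Fin n) (Fin n) ℝ)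
    (hAs : ∀ i j, As i j = max (A i j) (A j i))
    (L : Matrix (Fin n) (Fin n) ℂ)
    (hL : ∀ i j, L i j =
      ((if i = j then ∑ k, As i k else 0 : ℝ) : ℂ) -
        (As i j : ℂ) * Complex.exp (Complex.I * (2 * Real.pi * q * (A i j - A j i))))
    (hs0 : Real.sin (2 * Real.pi * q) ≠ 0)
    (T : Matrix (Fin n) (Fin n) ℝ)
    (hT : ∀ i j, i ≠ j → T i j = ((-L) i j).re +
      ((2 - Real.cos (2 * Real.pi * q)) / Real.sin (2 * Real.pi * q)) * ((-L) i j).im) :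
    ∀ i j, (if i ≠ j ∧ 1 < T i j then (1 : ℝ) else 0) = A i j := by
  intro i j
  by_cases hij : i = j
  · subst hij
    simp [hloop]
  have hLij : (-L) i j = ((max (A i j) (A j i) : ℝ) : ℂ) *
      exp (I * (((2 * Real.pi * q : ℝ) : ℂ) * (A i j - A j i))) := by
    simp [hL, hij, hAs]
  have := threshold_magnetic_entry_eq hs0 (hA01 i j) (hA01 j i) (h2cyc i j hij)
  simpa [hij, hT i j hij, hLij] using this

/-- Exact recovery of the directed adjacency from the `T`-matrix by thresholding at
`1`: `Â i j = 1` iff `i ≠ j` and `T i j > 1`, and `Â = A`. -/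
theorem dag_adjacency_recovery_by_thresholding {n : ℕ} (q : ℝ)
    (A : Matrix (Fin n) (Fin n) ℝ)
    (hA01 : ∀ i j, A i j = 0 ∨ A i j = 1)
    (hloop : ∀ i, A i i = 0)
    (h2cyc : ∀ i j, i ≠ j → A i j * A j i = 0)
    (As : Matrix (Fin n) (Fin n) ℝ)
    (hAs : ∀ i j, As i j = max (A i j) (A j i))
    (L : Matrix (Fin n) (Fin n) ℂ)
    (hL : ∀ i j, L i j =
      ((if i = j then ∑ k, As i k else 0 : ℝ) : ℂ) -
        (As i j : ℂ) * Complex.exp (Complex.I * (2 * Real.pi * q * (A i j - A j i))))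
    (hs0 : Real.sin (2 * Real.pi * q) ≠ 0)
    (hc1 : Real.cos (2 * Real.pi * q) < 1)
    (T : Matrix (Fin n) (Fin n) ℝ)
    (hT : ∀ i j, i ≠ j → T i j = ((-L) i j).re +
      ((2 - Real.cos (2 * Real.pi * q)) / Real.sin (2 * Real.pi * q)) * ((-L) i j).im) :
    ∀ i j, (if i ≠ j ∧ 1 < T i j then (1 : ℝ) else 0) = A i j :=
  dag_adjacency_recovery_by_thresholding_general q A hA01 hloop h2cyc As hAs L hL hs0 T hT
end
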